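/- Let n ≥ 2, p > 1, φ₁(x) = ∫_{S^{n-1}} e^{x·ω} dω, and ψ₁(t,x) = e^{-t} φ₁(x). Then there is a constant C > 0 such that for all t > 0, ∫_{|x| ≤ t+1} ψ₁(t,x)^{p/(p-1)} dx ≤ C (1+t)^{(n-1) − (n-1)p/(2(p-1))}. -/

import Mathlib

open Real MeasureTheory RealInnerProductSpace

/-- The function `φ₁(x) = ∫_{S^{n-1}} e^{x·ω} dω`, integrating over the unit
sphere in `ℝⁿ` with its surface measure. -/
noncomputable def phi1 (n : ℕ) (x : EuclideanSpace ℝ (Fin n)) : ℝ :=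
  ∫ ω : Metric.sphere (0 : EuclideanSpace ℝ (Fin n)) 1,
    Real.exp ⟪x, (ω : EuclideanSpace ℝ (Fin n))⟫ ∂((volume : Measure (EuclideanSpace ℝ (Fin n))).toSphere)

/-- The test function `ψ₁(t,x) = e^{-t} φ₁(x)`. -/
noncomputable def psi1 (n : ℕ) (t : ℝ) (x : EuclideanSpace ℝ (Fin n)) : ℝ :=
  Real.exp (-t) * phi1 n x

/-!
In polar coordinates `φ₁(x)` is `n` times the integral of `exp ⟪x, y / ‖y‖⟫` over the unit ball.
Write `x = r e` with `e` a unit vector and `s = ⟪e, y⟫`. On the ball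
`r s / ‖y‖ ≤ r - (r / 2) (‖y‖² - s²)`, so the integrand is at most `eʳ` times the indicator of
the slab `|s| ≤ 1` times a Gaussian of variance `1 / r` in the `n - 1` directions orthogonal
to `e`. This gives `φ₁(x) ≤ 2 n e^‖x‖ (2π / ‖x‖)^((n-1)/2)`.

With `q = p / (p - 1)`, polar coordinates reduce the integral of `ψ₁(t, ·)^q` over the ball of
radius `t + 1` to `∫₀^{t+1} u^(n-1) e^{q(u-t)} (1+u)^{-q(n-1)/2} du`. For `s = t + 1 - u` we have
`1 + t ≤ (1 + s)(1 + u)`, so the weight `(1+u)^{-q(n-1)/2}` is at most `(1+t)^{-q(n-1)/2}` times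
a power of `1 + s`, and the factor `e^{-qs}` absorbs that power.
-/

open Set Metric Module

section Polar

variable {E : Type*} [NormedAddCommGroup E] [NormedSpace ℝ E] [FiniteDimensional ℝ E]
  [MeasurableSpace E] [BorelSpace E] [Nontrivial E] (μ : Measure E) [μ.IsAddHaarMeasure]

theorem integral_comp_smul_inv_norm_mul (f : E → ℝ) (g : ℝ → ℝ) :
    ∫ y, f (‖y‖⁻¹ • y) * g ‖y‖ ∂μ =
      (∫ ω, f ω ∂μ.toSphere) * ∫ r in Ioi 0, r ^ (finrank ℝ E - 1) * g r :=
  calc ∫ y, f (‖y‖⁻¹ • y) * g ‖y‖ ∂μ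
      = ∫ y : ({0}ᶜ : Set E), f (‖y.1‖⁻¹ • y.1) * g ‖y.1‖ ∂(μ.comap (↑)) := by
        rw [integral_subtype_comap (measurableSet_singleton _).compl
          fun y ↦ f (‖y‖⁻¹ • y) * g ‖y‖, restrict_compl_singleton]
    _ = ∫ z, f z.1 * g z.2 ∂(μ.toSphere.prod (.volumeIoiPow (finrank ℝ E - 1))) := by
        simpa using μ.measurePreserving_homeomorphUnitSphereProd.integral_comp
          (Homeomorph.measurableEmbedding _) (fun z ↦ f z.1 * g z.2)
    _ = (∫ ω, f ω ∂μ.toSphere) * ∫ r, g r ∂(.volumeIoiPow (finrank ℝ E - 1)) :=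
        integral_prod_mul (fun ω : sphere (0 : E) 1 ↦ f ω) (fun r : Ioi (0 : ℝ) ↦ g r)
    _ = _ := by
        congr 1
        simp only [Measure.volumeIoiPow, ENNReal.ofReal]
        rw [integral_withDensity_eq_integral_smul
            (measurable_subtype_coe.pow_const _).real_toNNReal,
          integral_subtype_comap measurableSet_Ioi
            fun r ↦ (r ^ (finrank ℝ E - 1)).toNNReal • g r]
        refine setIntegral_congr_fun measurableSet_Ioi fun r hr ↦ ?_
        rw [NNReal.smul_def, Real.coe_toNNReal _ (pow_nonneg (le_of_lt hr) _), smul_eq_mul]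

theorem integral_toSphere_eq_finrank_mul_setIntegral_ball (f : E → ℝ) :
    ∫ ω, f ω ∂μ.toSphere = finrank ℝ E * ∫ y in ball 0 1, f (‖y‖⁻¹ • y) ∂μ := by
  have hd : (finrank ℝ E : ℝ) ≠ 0 := Nat.cast_ne_zero.2 finrank_pos.ne'
  have hball : ∫ y in ball 0 1, f (‖y‖⁻¹ • y) ∂μ =
      ∫ y, f (‖y‖⁻¹ • y) * (Iio 1).indicator 1 ‖y‖ ∂μ := by
    rw [← integral_indicator measurableSet_ball]
    congr 1 with y
    by_cases hy : ‖y‖ < 1 <;> simp [indicator, hy]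
  have hradial : ∫ r in Ioi 0, r ^ (finrank ℝ E - 1) * (Iio 1).indicator 1 r =
      (finrank ℝ E : ℝ)⁻¹ := by
    have hd1 : ((finrank ℝ E - 1 : ℕ) : ℝ) + 1 = finrank ℝ E := by
      rw [Nat.cast_sub finrank_pos, Nat.cast_one, sub_add_cancel]
    calc ∫ r in Ioi 0, r ^ (finrank ℝ E - 1) * (Iio 1).indicator 1 r
        = ∫ r in Ioi 0, (Iio 1).indicator (· ^ (finrank ℝ E - 1)) r := by
          congr 1 with r
          by_cases hr : r < 1 <;> simp [indicator, hr]
      _ = ∫ r in (0)..1, r ^ (finrank ℝ E - 1) := by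
          rw [setIntegral_indicator measurableSet_Iio, Ioi_inter_Iio,
            intervalIntegral.integral_of_le zero_le_one, integral_Ioc_eq_integral_Ioo]
      _ = (finrank ℝ E : ℝ)⁻¹ := by simp [integral_pow, hd1]
  rw [hball, integral_comp_smul_inv_norm_mul, hradial, mul_left_comm, mul_inv_cancel₀ hd, mul_one]

theorem setIntegral_closedBall_fun_norm (f : ℝ → ℝ) (R : ℝ) :
    ∫ x in closedBall 0 R, f ‖x‖ ∂μ =
      finrank ℝ E * μ.real (ball 0 1) * ∫ u in Ioc 0 R, u ^ (finrank ℝ E - 1) * f u := by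
  have hball : ∫ x in closedBall 0 R, f ‖x‖ ∂μ = ∫ x, (Iic R).indicator f ‖x‖ ∂μ := by
    rw [← integral_indicator measurableSet_closedBall]
    congr 1 with x
    by_cases hx : ‖x‖ ≤ R <;> simp [indicator, hx]
  have hradial : ∫ u in Ioi 0, u ^ (finrank ℝ E - 1) • (Iic R).indicator f u =
      ∫ u in Ioc 0 R, u ^ (finrank ℝ E - 1) * f u := by
    have hind : ∀ u, u ^ (finrank ℝ E - 1) • (Iic R).indicator f u =
        (Iic R).indicator (fun u ↦ u ^ (finrank ℝ E - 1) * f u) u := fun u ↦ by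
      by_cases hu : u ≤ R <;> simp [indicator, hu]
    simp_rw [hind]
    rw [setIntegral_indicator measurableSet_Iic, Ioi_inter_Iic]
  rw [hball, integral_fun_norm_addHaar, hradial, nsmul_eq_mul, smul_eq_mul, mul_assoc]

end Polar

theorem exists_orthonormalBasis_apply_eq {E ι : Type*} [NormedAddCommGroup E]
    [InnerProductSpace ℝ E] [FiniteDimensional ℝ E] [Fintype ι]
    (hι : finrank ℝ E = Fintype.card ι) (i₀ : ι) {e : E} (he : ‖e‖ = 1) :
    ∃ b : OrthonormalBasis ι ℝ E, b i₀ = e := by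
  have hv : Orthonormal ℝ (({i₀} : Set ι).domRestrict fun _ ↦ e) :=
    ⟨fun _ ↦ he, fun i j hij ↦ (hij (Subtype.ext (i.2.trans j.2.symm))).elim⟩
  obtain ⟨b, hb⟩ := hv.exists_orthonormalBasis_extension_of_card_eq hι
  exact ⟨b, hb i₀ rfl⟩

theorem inv_mul_le_one_sub_sq_sub_sq_div_two {m s : ℝ} (hm : m ≤ 1) (hs : |s| ≤ m) :
    m⁻¹ * s ≤ 1 - (m ^ 2 - s ^ 2) / 2 := by
  rcases ((abs_nonneg s).trans hs).eq_or_lt with rfl | hm0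
  · simp [abs_nonpos_iff.1 hs]
  obtain ⟨hs₁, hs₂⟩ := abs_le.1 hs
  rw [inv_mul_le_iff₀ hm0]
  nlinarith [mul_nonneg (sub_nonneg.2 hs₂) (by linarith : (0:ℝ) ≤ 2 - m - s),
    mul_nonneg (sub_nonneg.2 hm) (by nlinarith : (0:ℝ) ≤ m ^ 2 - s ^ 2)]

section SlabGaussian

variable {ι : Type*} [DecidableEq ι]

noncomputable def slabGaussian (r : ℝ) (i₀ i : ι) (s : ℝ) : ℝ :=
  if i = i₀ then (Icc (-1) 1).indicator 1 s else exp (-(r / 2) * s ^ 2)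

variable {r : ℝ} (i₀ : ι)

theorem slabGaussian_nonneg (i : ι) (s : ℝ) : 0 ≤ slabGaussian r i₀ i s := by
  unfold slabGaussian
  split_ifs
  · exact indicator_nonneg (fun _ _ ↦ zero_le_one) s
  · positivity

theorem integrable_slabGaussian (hr : 0 < r) (i : ι) : Integrable (slabGaussian r i₀ i) := by
  unfold slabGaussian
  split_ifs
  · exact (integrable_indicator_iff measurableSet_Icc).2 (integrableOn_const measure_Icc_lt_top.ne)
  · exact integrable_exp_neg_mul_sq (half_pos hr)

theorem integral_slabGaussian (i : ι) :
    ∫ s, slabGaussian r i₀ i s = if i = i₀ then 2 else √(π / (r / 2)) := by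
  unfold slabGaussian
  split_ifs
  · rw [integral_indicator_one measurableSet_Icc, Real.volume_real_Icc]
    norm_num
  · exact integral_gaussian (r / 2)

theorem integral_prod_slabGaussian [Fintype ι] :
    ∫ z : ι → ℝ, ∏ i, slabGaussian r i₀ i (z i) = 2 * √(π / (r / 2)) ^ (Fintype.card ι - 1) := by
  rw [integral_fintype_prod_volume_eq_prod, ← Finset.mul_prod_erase _ _ (Finset.mem_univ i₀),
    Finset.prod_congr rfl fun i hi ↦ (integral_slabGaussian i₀ i).trans
      (if_neg (Finset.ne_of_mem_erase hi)),
    Finset.prod_const, Finset.card_erase_of_mem (Finset.mem_univ _), Finset.card_univ,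
    integral_slabGaussian, if_pos rfl]

theorem prod_slabGaussian_eq [Fintype ι] {z : ι → ℝ} (hz : |z i₀| ≤ 1) :
    ∏ i, slabGaussian r i₀ i (z i) = exp (-(r / 2) * ∑ i ∈ Finset.univ.erase i₀, z i ^ 2) := by
  rw [← Finset.mul_prod_erase _ _ (Finset.mem_univ i₀), Finset.mul_sum, exp_sum, slabGaussian,
    if_pos rfl, indicator_of_mem (mem_Icc.2 (abs_le.1 hz)), Pi.one_apply, one_mul]
  exact Finset.prod_congr rfl fun i hi ↦ if_neg (Finset.ne_of_mem_erase hi)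

end SlabGaussian

theorem OrthonormalBasis.measurePreserving_measurableEquiv_trans_ofLp {E ι : Type*}
    [NormedAddCommGroup E] [InnerProductSpace ℝ E] [FiniteDimensional ℝ E] [MeasurableSpace E]
    [BorelSpace E] [Fintype ι] (b : OrthonormalBasis ι ℝ E) :
    MeasurePreserving (b.measurableEquiv.trans (MeasurableEquiv.toLp 2 (ι → ℝ)).symm) :=
  (PiLp.volume_preserving_ofLp ι).comp b.measurePreserving_measurableEquiv

section OrthonormalBasis

variable {E ι : Type*} [NormedAddCommGroup E] [InnerProductSpace ℝ E] [Fintype ι]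
  [DecidableEq ι] (b : OrthonormalBasis ι ℝ E) (i₀ : ι) {r : ℝ}

theorem exp_inner_le_exp_mul_prod_slabGaussian (hr : 0 ≤ r) {y : E} (hy : ‖y‖ ≤ 1) :
    exp ⟪r • b i₀, ‖y‖⁻¹ • y⟫ ≤ exp r * ∏ i, slabGaussian r i₀ i (b.repr y i) := by
  have hcoord : b.repr y i₀ = ⟪b i₀, y⟫ := b.repr_apply_apply y i₀
  have hs : |b.repr y i₀| ≤ ‖y‖ := by
    simpa [hcoord, b.orthonormal.1 i₀] using abs_real_inner_le_norm (b i₀) y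
  have hnorm : ‖y‖ ^ 2 = ∑ i, b.repr y i ^ 2 := by
    rw [← b.repr.norm_map, EuclideanSpace.norm_sq_eq]
    simp only [Real.norm_eq_abs, sq_abs]
  have hrest : ∑ i ∈ Finset.univ.erase i₀, b.repr y i ^ 2 = ‖y‖ ^ 2 - b.repr y i₀ ^ 2 := by
    rw [hnorm, ← Finset.add_sum_erase _ _ (Finset.mem_univ i₀), add_sub_cancel_left]
  have hinner : ⟪r • b i₀, ‖y‖⁻¹ • y⟫ = r * (‖y‖⁻¹ * b.repr y i₀) := by
    rw [real_inner_smul_left, real_inner_smul_right, hcoord]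
  rw [hinner, prod_slabGaussian_eq i₀ (hs.trans hy), hrest, ← exp_add, exp_le_exp]
  nlinarith [mul_le_mul_of_nonneg_left (inv_mul_le_one_sub_sq_sub_sq_div_two hy hs) hr]

variable [FiniteDimensional ℝ E] [MeasurableSpace E] [BorelSpace E]

theorem integrable_prod_slabGaussian_repr (hr : 0 < r) :
    Integrable (fun y : E ↦ ∏ i, slabGaussian r i₀ i (b.repr y i)) :=
  b.measurePreserving_measurableEquiv_trans_ofLp.integrable_comp_emb
    (MeasurableEquiv.measurableEmbedding _) |>.2 (.fintype_prod (integrable_slabGaussian i₀ hr))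

theorem integral_prod_slabGaussian_repr :
    ∫ y : E, ∏ i, slabGaussian r i₀ i (b.repr y i) =
      2 * √(π / (r / 2)) ^ (Fintype.card ι - 1) := by
  rw [← integral_prod_slabGaussian i₀]
  exact b.measurePreserving_measurableEquiv_trans_ofLp.integral_comp'
    (fun z ↦ ∏ i, slabGaussian r i₀ i (z i))

end OrthonormalBasis

section Phi1

variable {n : ℕ}

theorem phi1_nonneg (x : EuclideanSpace ℝ (Fin n)) : 0 ≤ phi1 n x :=
  integral_nonneg fun _ ↦ (exp_pos _).le

theorem phi1_le_measureReal_univ_mul_exp_norm (x : EuclideanSpace ℝ (Fin n)) :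
    phi1 n x ≤ (volume : Measure (EuclideanSpace ℝ (Fin n))).toSphere.real univ * exp ‖x‖ := by
  calc phi1 n x ≤ ∫ _ : sphere (0 : EuclideanSpace ℝ (Fin n)) 1, exp ‖x‖ ∂volume.toSphere :=
        integral_mono_of_nonneg (.of_forall fun _ ↦ (exp_pos _).le) (integrable_const _)
          (.of_forall fun ω ↦ exp_le_exp.2 <| (real_inner_le_norm _ _).trans_eq <| by
            rw [norm_eq_of_mem_sphere ω, mul_one])
    _ = _ := by rw [integral_const, smul_eq_mul]

variable [NeZero n]

theorem phi1_eq_mul_setIntegral_ball (x : EuclideanSpace ℝ (Fin n)) :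
    phi1 n x = n * ∫ y in ball 0 1, exp ⟪x, ‖y‖⁻¹ • y⟫ := by
  rw [phi1, integral_toSphere_eq_finrank_mul_setIntegral_ball _ fun y ↦ exp ⟪x, y⟫,
    finrank_euclideanSpace_fin]

theorem phi1_le_of_ne_zero {x : EuclideanSpace ℝ (Fin n)} (hx : x ≠ 0) :
    phi1 n x ≤ 2 * n * exp ‖x‖ * (2 * π / ‖x‖) ^ (((n : ℝ) - 1) / 2) := by
  have hr : 0 < ‖x‖ := norm_pos_iff.2 hx
  have he : ‖‖x‖⁻¹ • x‖ = 1 := by rw [norm_smul, norm_inv, norm_norm, inv_mul_cancel₀ hr.ne']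
  obtain ⟨b, hb⟩ := exists_orthonormalBasis_apply_eq (by simp) (0 : Fin n) he
  have hxb : x = ‖x‖ • b 0 := by rw [hb, smul_inv_smul₀ hr.ne']
  have hmaj := integrable_prod_slabGaussian_repr b 0 hr
  calc phi1 n x = n * ∫ y in ball 0 1, exp ⟪‖x‖ • b 0, ‖y‖⁻¹ • y⟫ := by
        rw [phi1_eq_mul_setIntegral_ball, ← hxb]
    _ ≤ n * ∫ y in ball 0 1, exp ‖x‖ * ∏ i, slabGaussian ‖x‖ 0 i (b.repr y i) := by
        refine mul_le_mul_of_nonneg_left ?_ n.cast_nonneg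
        refine integral_mono_of_nonneg (.of_forall fun _ ↦ (exp_pos _).le)
          (hmaj.const_mul _).integrableOn ?_
        exact ae_restrict_of_forall_mem measurableSet_ball fun y hy ↦
          exp_inner_le_exp_mul_prod_slabGaussian b 0 hr.le (mem_ball_zero_iff.1 hy).le
    _ ≤ n * ∫ y, exp ‖x‖ * ∏ i, slabGaussian ‖x‖ 0 i (b.repr y i) := by
        refine mul_le_mul_of_nonneg_left ?_ n.cast_nonneg
        exact setIntegral_le_integral (hmaj.const_mul _) (.of_forall fun y ↦
          mul_nonneg (exp_pos _).le (Finset.prod_nonneg fun i _ ↦ slabGaussian_nonneg 0 i _))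
    _ = 2 * n * exp ‖x‖ * (2 * π / ‖x‖) ^ (((n : ℝ) - 1) / 2) := by
        rw [integral_const_mul, integral_prod_slabGaussian_repr, Fintype.card_fin, sqrt_eq_rpow,
          ← rpow_natCast, ← rpow_mul (by positivity), Nat.cast_pred (Nat.pos_of_neZero n)]
        field_simp

theorem phi1_le_mul_exp_norm_mul_one_add_norm_rpow :
    ∃ C > 0, ∀ x : EuclideanSpace ℝ (Fin n),
      phi1 n x ≤ C * exp ‖x‖ * (1 + ‖x‖) ^ (-(((n : ℝ) - 1) / 2)) := by
  set c := ((n : ℝ) - 1) / 2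
  have hc : 0 ≤ c :=
    div_nonneg (sub_nonneg.2 (Nat.one_le_cast.2 (Nat.pos_of_neZero n))) zero_le_two
  set σ := (volume : Measure (EuclideanSpace ℝ (Fin n))).toSphere.real univ
  have hσ : 0 ≤ σ := measureReal_nonneg
  have hn : (0 : ℝ) < n := Nat.cast_pos.2 (Nat.pos_of_neZero n)
  refine ⟨2 * n * (4 * π) ^ c + σ * 2 ^ c, by positivity, fun x ↦ ?_⟩
  have hx₁ : 0 < 1 + ‖x‖ := by positivity
  have hweight : ∀ {b : ℝ}, 0 ≤ b → (b / (1 + ‖x‖)) ^ c = b ^ c * (1 + ‖x‖) ^ (-c) := fun hb ↦ by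
    rw [div_rpow hb hx₁.le, rpow_neg hx₁.le, div_eq_mul_inv]
  suffices phi1 n x ≤
      2 * n * exp ‖x‖ * (4 * π / (1 + ‖x‖)) ^ c + σ * exp ‖x‖ * (2 / (1 + ‖x‖)) ^ c by
    rw [hweight (by positivity), hweight zero_le_two] at this
    linear_combination this
  have hlarge : 0 ≤ 2 * n * exp ‖x‖ * (4 * π / (1 + ‖x‖)) ^ c := by positivity
  have hsmall : 0 ≤ σ * exp ‖x‖ * (2 / (1 + ‖x‖)) ^ c := by positivity
  rcases le_or_gt 1 ‖x‖ with hx | hx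
  · have hratio : 2 * π / ‖x‖ ≤ 4 * π / (1 + ‖x‖) := by
      rw [div_le_div_iff₀ (by linarith) hx₁]; nlinarith [pi_pos]
    calc phi1 n x ≤ 2 * n * exp ‖x‖ * (2 * π / ‖x‖) ^ c :=
          phi1_le_of_ne_zero (norm_pos_iff.1 (by linarith))
      _ ≤ 2 * n * exp ‖x‖ * (4 * π / (1 + ‖x‖)) ^ c := by gcongr
      _ ≤ _ := le_add_of_nonneg_right hsmall
  · have hone : 1 ≤ (2 / (1 + ‖x‖)) ^ c := one_le_rpow ((one_le_div hx₁).2 (by linarith)) hc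
    calc phi1 n x ≤ σ * exp ‖x‖ := phi1_le_measureReal_univ_mul_exp_norm x
      _ ≤ σ * exp ‖x‖ * (2 / (1 + ‖x‖)) ^ c := le_mul_of_one_le_right (by positivity) hone
      _ ≤ _ := le_add_of_nonneg_left hlarge

end Phi1

theorem psi1_rpow_le_of_phi1_le {n : ℕ} {C β q t : ℝ} {x : EuclideanSpace ℝ (Fin n)}
    (hC : 0 ≤ C) (hq : 0 ≤ q) (hφ : phi1 n x ≤ C * exp ‖x‖ * (1 + ‖x‖) ^ (-β)) :
    psi1 n t x ^ q ≤ C ^ q * (exp (q * (‖x‖ - t)) * (1 + ‖x‖) ^ (-(q * β))) := by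
  have hx₁ : 0 < 1 + ‖x‖ := by positivity
  have hψ : psi1 n t x ≤ C * (exp (‖x‖ - t) * (1 + ‖x‖) ^ (-β)) := by
    rw [psi1, sub_eq_neg_add, exp_add]
    nlinarith [mul_le_mul_of_nonneg_left hφ (exp_pos (-t)).le]
  calc psi1 n t x ^ q ≤ (C * (exp (‖x‖ - t) * (1 + ‖x‖) ^ (-β))) ^ q :=
        rpow_le_rpow (mul_nonneg (exp_pos _).le (phi1_nonneg x)) hψ hq
    _ = C ^ q * (exp (q * (‖x‖ - t)) * (1 + ‖x‖) ^ (-(q * β))) := by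
        rw [mul_rpow hC (by positivity), mul_rpow (exp_pos _).le (by positivity), ← exp_mul,
          ← rpow_mul hx₁.le, mul_comm (‖x‖ - t), neg_mul, mul_comm β]

theorem one_add_rpow_le_mul_exp {a ε s : ℝ} (ha : 0 ≤ a) (hε : 0 < ε) (hs : 0 ≤ s) :
    (1 + s) ^ a ≤ (a / ε + 1) ^ a * exp (ε * s) := by
  set k := a / ε + 1
  have hk : 1 ≤ k := le_add_of_nonneg_left (by positivity)
  have hk₀ : 0 < k := by positivity
  have hbase : 1 + s ≤ k * exp (s / k) :=
    calc 1 + s ≤ k * (s / k + 1) := by rw [mul_add, mul_div_cancel₀ _ hk₀.ne']; linarith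
      _ ≤ k * exp (s / k) := by gcongr; exact add_one_le_exp _
  have hexp : a * (s / k) ≤ ε * s := by
    have hak : a / k ≤ ε := by
      rw [div_le_iff₀ hk₀, mul_add, mul_div_cancel₀ _ hε.ne', mul_one]
      linarith
    calc a * (s / k) = a / k * s := by ring
      _ ≤ ε * s := by gcongr
  calc (1 + s) ^ a ≤ (k * exp (s / k)) ^ a := rpow_le_rpow (by positivity) hbase ha
    _ = k ^ a * exp (a * (s / k)) := by
        rw [mul_rpow hk₀.le (exp_pos _).le, ← exp_mul, mul_comm _ a]
    _ ≤ k ^ a * exp (ε * s) := by gcongr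

theorem setIntegral_Ioc_exp_mul_sub_le {κ : ℝ} (hκ : 0 < κ) (a R : ℝ) :
    ∫ u in Ioc a R, exp (κ * (u - R)) ≤ κ⁻¹ := by
  have hsplit : ∀ u, exp (κ * (u - R)) = exp (κ * u) * exp (-(κ * R)) := fun u ↦ by
    rw [← exp_add, mul_sub, sub_eq_add_neg]
  have hint : IntegrableOn (fun u ↦ exp (κ * (u - R))) (Iic R) := by
    simp_rw [hsplit]
    exact (integrableOn_exp_mul_Iic hκ R).mul_const _
  calc ∫ u in Ioc a R, exp (κ * (u - R))
      ≤ ∫ u in Iic R, exp (κ * (u - R)) :=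
        setIntegral_mono_set hint (.of_forall fun _ ↦ (exp_pos _).le)
          Ioc_subset_Iic_self.eventuallyLE
    _ = κ⁻¹ := by
        simp_rw [hsplit]
        rw [integral_mul_const, integral_exp_mul_Iic hκ, div_mul_eq_mul_div, ← exp_add,
          add_neg_cancel, exp_zero, one_div]

theorem pow_mul_exp_mul_rpow_le {a q t u : ℝ} (k : ℕ) (ha : 0 ≤ a) (hq : 0 < q) (ht : 0 ≤ t)
    (hu : 0 ≤ u) (hut : u ≤ t + 1) :
    u ^ k * (exp (q * (u - t)) * (1 + u) ^ (-a)) ≤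
      (2 * a / q + 1) ^ a * exp q * (1 + t) ^ ((k : ℝ) - a) * exp (q / 2 * (u - (t + 1))) := by
  set s := t + 1 - u with hs
  have hs₀ : 0 ≤ s := sub_nonneg.2 hut
  have hpow : u ^ k ≤ (1 + t) ^ (k : ℝ) := by
    rw [rpow_natCast]; exact pow_le_pow_left₀ hu (by linarith) k
  have hdecay : (1 + u) ^ (-a) ≤ (1 + s) ^ a * (1 + t) ^ (-a) := by
    have hprod : 1 + t ≤ (1 + s) * (1 + u) := by nlinarith [mul_nonneg hu hs₀]
    rw [rpow_neg (by linarith), rpow_neg (by linarith), ← div_eq_mul_inv,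
      le_div_iff₀ (by positivity), inv_mul_le_iff₀ (by positivity),
      ← mul_rpow (by linarith) (by linarith)]
    exact rpow_le_rpow (by linarith) (by linarith) ha
  have hpoly : (1 + s) ^ a ≤ (2 * a / q + 1) ^ a * exp (q / 2 * s) := by
    simpa [div_div_eq_mul_div, mul_comm a 2] using one_add_rpow_le_mul_exp ha (half_pos hq) hs₀
  have hexp : exp (q * (u - t)) * exp (q / 2 * s) = exp q * exp (q / 2 * (u - (t + 1))) := by
    rw [← exp_add, ← exp_add, hs]; ring_nf
  calc u ^ k * (exp (q * (u - t)) * (1 + u) ^ (-a))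
      ≤ (1 + t) ^ (k : ℝ) * (exp (q * (u - t)) *
          ((2 * a / q + 1) ^ a * exp (q / 2 * s) * (1 + t) ^ (-a))) := by
        gcongr
        exact hdecay.trans (mul_le_mul_of_nonneg_right hpoly (by positivity))
    _ = (2 * a / q + 1) ^ a * exp q * (1 + t) ^ ((k : ℝ) - a) * exp (q / 2 * (u - (t + 1))) := by
        rw [sub_eq_add_neg (k : ℝ) a, rpow_add (by linarith)]
        linear_combination ((2 * a / q + 1) ^ a * (1 + t) ^ (k : ℝ) * (1 + t) ^ (-a)) * hexp

theorem setIntegral_Ioc_pow_mul_exp_mul_rpow_le {a q t : ℝ} (k : ℕ) (ha : 0 ≤ a) (hq : 0 < q)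
    (ht : 0 ≤ t) :
    ∫ u in Ioc 0 (t + 1), u ^ k * (exp (q * (u - t)) * (1 + u) ^ (-a)) ≤
      2 / q * (2 * a / q + 1) ^ a * exp q * (1 + t) ^ ((k : ℝ) - a) := by
  set K := (2 * a / q + 1) ^ a * exp q * (1 + t) ^ ((k : ℝ) - a)
  have hK : 0 ≤ K := by positivity
  calc ∫ u in Ioc 0 (t + 1), u ^ k * (exp (q * (u - t)) * (1 + u) ^ (-a))
      ≤ ∫ u in Ioc 0 (t + 1), K * exp (q / 2 * (u - (t + 1))) := by
        refine integral_mono_of_nonneg ?_ ?_ ?_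
        · exact ae_restrict_of_forall_mem measurableSet_Ioc fun u hu ↦ by
            have := hu.1.le; positivity
        · exact (continuous_const.mul (by fun_prop)).integrableOn_Ioc
        · exact ae_restrict_of_forall_mem measurableSet_Ioc fun u hu ↦
            pow_mul_exp_mul_rpow_le k ha hq ht hu.1.le hu.2
    _ ≤ K * (q / 2)⁻¹ := by
        rw [integral_const_mul]
        exact mul_le_mul_of_nonneg_left (setIntegral_Ioc_exp_mul_sub_le (half_pos hq) _ _) hK
    _ = 2 / q * (2 * a / q + 1) ^ a * exp q * (1 + t) ^ ((k : ℝ) - a) := by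
        rw [inv_div]; ring

theorem setIntegral_closedBall_psi1_rpow_le {n : ℕ} [NeZero n] {C β q : ℝ} (hC : 0 ≤ C)
    (hq : 0 ≤ q) (hφ : ∀ x, phi1 n x ≤ C * exp ‖x‖ * (1 + ‖x‖) ^ (-β)) (t : ℝ) :
    ∫ x in closedBall 0 (t + 1), psi1 n t x ^ q ≤
      C ^ q * (n * (volume : Measure (EuclideanSpace ℝ (Fin n))).real (ball 0 1) *
        ∫ u in Ioc 0 (t + 1), u ^ (n - 1) * (exp (q * (u - t)) * (1 + u) ^ (-(q * β)))) := by
  have hmaj : Continuous fun x : EuclideanSpace ℝ (Fin n) ↦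
      C ^ q * (exp (q * (‖x‖ - t)) * (1 + ‖x‖) ^ (-(q * β))) :=
    continuous_const.mul <| (by fun_prop : Continuous _).mul <|
      (by fun_prop : Continuous _).rpow_const fun x ↦ Or.inl (by positivity)
  calc ∫ x in closedBall 0 (t + 1), psi1 n t x ^ q
      ≤ ∫ x in closedBall 0 (t + 1), C ^ q * (exp (q * (‖x‖ - t)) * (1 + ‖x‖) ^ (-(q * β))) :=
        integral_mono_of_nonneg
          (.of_forall fun x ↦ rpow_nonneg (mul_nonneg (exp_pos _).le (phi1_nonneg x)) _)
          (hmaj.continuousOn.integrableOn_compact (isCompact_closedBall _ _))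
          (.of_forall fun x ↦ psi1_rpow_le_of_phi1_le hC hq (hφ x))
    _ = _ := by
        rw [integral_const_mul, setIntegral_closedBall_fun_norm volume
          fun u ↦ exp (q * (u - t)) * (1 + u) ^ (-(q * β)), finrank_euclideanSpace_fin]

theorem stmt_8 (n : ℕ) (hn : 2 ≤ n) (p : ℝ) (hp : 1 < p) :
    ∃ C > (0:ℝ), ∀ t > (0:ℝ),
      (∫ x in Metric.closedBall (0 : EuclideanSpace ℝ (Fin n)) (t + 1),
          psi1 n t x ^ (p / (p - 1)))
        ≤ C * (1 + t) ^ (((n:ℝ) - 1) - ((n:ℝ) - 1) * p / (2 * (p - 1))) := by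
  have : NeZero n := ⟨by omega⟩
  obtain ⟨C, hC, hφ⟩ := phi1_le_mul_exp_norm_mul_one_add_norm_rpow (n := n)
  set q := p / (p - 1)
  set a := q * (((n : ℝ) - 1) / 2)
  have hq : 0 < q := div_pos (by linarith) (by linarith)
  have ha : 0 ≤ a :=
    mul_nonneg hq.le (div_nonneg (sub_nonneg.2 (Nat.one_le_cast.2 (by omega))) zero_le_two)
  set V := (volume : Measure (EuclideanSpace ℝ (Fin n))).real (ball 0 1)
  have hV : 0 < V := ENNReal.toReal_pos (measure_ball_pos _ _ one_pos).ne' measure_ball_lt_top.ne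
  set K := 2 / q * (2 * a / q + 1) ^ a * exp q
  have hexp : ((n - 1 : ℕ) : ℝ) - a = ((n : ℝ) - 1) - ((n : ℝ) - 1) * p / (2 * (p - 1)) := by
    have : p - 1 ≠ 0 := by linarith
    rw [Nat.cast_pred (by omega)]
    simp only [a, q]
    field_simp
  refine ⟨C ^ q * (n * V * K), by positivity, fun t ht ↦ ?_⟩
  calc ∫ x in closedBall 0 (t + 1), psi1 n t x ^ q
      ≤ C ^ q * (n * V *
          ∫ u in Ioc 0 (t + 1), u ^ (n - 1) * (exp (q * (u - t)) * (1 + u) ^ (-a))) :=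
        setIntegral_closedBall_psi1_rpow_le hC.le hq.le hφ t
    _ ≤ C ^ q * (n * V * (K * (1 + t) ^ (((n - 1 : ℕ) : ℝ) - a))) := by
        gcongr
        exact setIntegral_Ioc_pow_mul_exp_mul_rpow_le (n - 1) ha hq ht.le
    _ = C ^ q * (n * V * K) * (1 + t) ^ (((n : ℝ) - 1) - ((n : ℝ) - 1) * p / (2 * (p - 1))) := by
        rw [hexp]; ring
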